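/- With Q, R, J the simultaneously defined syntactic classes, for every ψ ∈ R, intuitionistic logic proves ¬_E¬ψ → ψ^E, i.e. ((ψ → False) → E) → ψ^E. -/

import Mathlib

/-- First-order formulas over a domain `α` with atomic propositions indexed by `ι`,
quantifiers rendered via higher-order abstract syntax. -/
inductive Fml (α ι : Type) : Type where
  | atom : ι → Fml α ι
  | bot : Fml α ι
  | and : Fml α ι → Fml α ι → Fml α ι
  | or : Fml α ι → Fml α ι → Fml α ι
  | imp : Fml α ι → Fml α ι → Fml α ι
  | all : (α → Fml α ι) → Fml α ι
  | ex : (α → Fml α ι) → Fml α ι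

/-- Standard semantic evaluation of a formula, given an interpretation `v` of the atoms. -/
def Fml.eval {α ι : Type} (v : ι → Prop) : Fml α ι → Prop
  | .atom i => v i
  | .bot => False
  | .and φ ψ => φ.eval v ∧ ψ.eval v
  | .or φ ψ => φ.eval v ∨ ψ.eval v
  | .imp φ ψ => φ.eval v → ψ.eval v
  | .all f => ∀ x, (f x).eval v
  | .ex f => ((∃ x, (f x).eval v))

/-- Semantic evaluation of the E-negative (Gentzen–Gödel style) translation `φ^E`:
`P^E := ¬_E¬_E P` for atoms, `⊥^E := E`, commuting with `∧`, `→`, `∀`, and with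
`¬_E¬_E` prefixed to `∨` and `∃`, where `¬_E θ := θ → E`. -/
def Fml.evalE {α ι : Type} (v : ι → Prop) (E : Prop) : Fml α ι → Prop
  | .atom i => (v i → E) → E
  | .bot => E
  | .and φ ψ => φ.evalE v E ∧ ψ.evalE v E
  | .or φ ψ => ((φ.evalE v E ∨ ψ.evalE v E) → E) → E
  | .imp φ ψ => φ.evalE v E → ψ.evalE v E
  | .all f => ∀ x, (f x).evalE v E
  | .ex f => ((∃ x, (f x).evalE v E) → E) → E

mutual
  /-- The syntactic class `Q`. -/
  inductive InQ {α ι : Type} : Fml α ι → Prop where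
    | bot : InQ .bot
    | atom (i : ι) : InQ (.atom i)
    | and {φ ψ} : InQ φ → InQ ψ → InQ (.and φ ψ)
    | or {φ ψ} : InQ φ → InQ ψ → InQ (.or φ ψ)
    | ex {f} : (∀ x, InQ (f x)) → InQ (.ex f)
    | all {f} : (∀ x, InQ (f x)) → InQ (.all f)
    | imp {φ ψ} : InJ φ → InQ ψ → InQ (.imp φ ψ)

  /-- The syntactic class `R`. -/
  inductive InR {α ι : Type} : Fml α ι → Prop where
    | bot : InR .bot
    | and {φ ψ} : InR φ → InR ψ → InR (.and φ ψ)
    | or {φ ψ} : InR φ → InR ψ → InR (.or φ ψ)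
    | all {f} : (∀ x, InR (f x)) → InR (.all f)
    | imp {φ ψ} : InJ φ → InR ψ → InR (.imp φ ψ)

  /-- The syntactic class `J`. -/
  inductive InJ {α ι : Type} : Fml α ι → Prop where
    | bot : InJ .bot
    | atom (i : ι) : InJ (.atom i)
    | and {φ ψ} : InJ φ → InJ ψ → InJ (.and φ ψ)
    | or {φ ψ} : InJ φ → InJ ψ → InJ (.or φ ψ)
    | ex {f} : (∀ x, InJ (f x)) → InJ (.ex f)
    | imp {φ ψ} : InR φ → InJ ψ → InJ (.imp φ ψ)
end

/-! Members of `J` satisfy `φ^E → ¬_E¬_E φ` and members of `R` satisfy `¬_E¬ψ → ψ^E`;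
both are proved by simultaneous induction, the implication case of each class using the
other class's property for the antecedent. -/

section

variable {α ι : Type} (v : ι → Prop) (E : Prop)

mutual

theorem InJ.negE_negE_eval_of_evalE {φ : Fml α ι} :
    InJ φ → φ.evalE v E → (φ.eval v → E) → E
  | .bot, e, _ => e
  | .atom _, h, k => h k
  | .and h₁ h₂, ⟨a, b⟩, k =>
    h₁.negE_negE_eval_of_evalE a fun p => h₂.negE_negE_eval_of_evalE b fun q => k ⟨p, q⟩
  | .or h₁ h₂, h, k =>
    h fun
      | .inl a => h₁.negE_negE_eval_of_evalE a (k ∘ .inl)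
      | .inr b => h₂.negE_negE_eval_of_evalE b (k ∘ .inr)
  | .ex hf, h, k => h fun ⟨x, a⟩ => (hf x).negE_negE_eval_of_evalE a fun p => k ⟨x, p⟩
  -- If the antecedent were refutable, the implication would hold vacuously.
  | .imp h₁ h₂, hi, k =>
    h₂.negE_negE_eval_of_evalE
      (hi (h₁.evalE_of_negE_neg_eval fun hn => k fun p => (hn p).elim))
      fun q => k fun _ => q

theorem InR.evalE_of_negE_neg_eval {ψ : Fml α ι} :
    InR ψ → ((ψ.eval v → False) → E) → ψ.evalE v E
  | .bot, h => h id
  | .and h₁ h₂, h =>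
    ⟨h₁.evalE_of_negE_neg_eval fun n => h fun ⟨a, _⟩ => n a,
     h₂.evalE_of_negE_neg_eval fun n => h fun ⟨_, b⟩ => n b⟩
  -- Refuting the left disjunct lets us derive the right one, and refuting both refutes `φ ∨ ψ`.
  | .or h₁ h₂, h => fun k =>
    k <| .inl <| h₁.evalE_of_negE_neg_eval fun n₁ =>
      k <| .inr <| h₂.evalE_of_negE_neg_eval fun n₂ => h fun d => d.elim n₁ n₂
  | .all hf, h => fun x => (hf x).evalE_of_negE_neg_eval fun n => h fun g => n (g x)
  | .imp h₁ h₂, h => fun a =>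
    h₂.evalE_of_negE_neg_eval fun n => h₁.negE_negE_eval_of_evalE a fun p => h fun g => n (g p)

end

end

/-- For `ψ ∈ R`, intuitionistic logic proves `¬_E¬ψ → ψ^E`. -/
theorem stmt14 {α ι : Type} (ψ : Fml α ι) (hψ : InR ψ) (v : ι → Prop) (E : Prop) :
    ((ψ.eval v → False) → E) → ψ.evalE v E :=
  hψ.evalE_of_negE_neg_eval v E
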